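/- arXiv:1504.02693 — 7 statements merged into one kernel-verified Lean document; each statement's English description precedes it below -/
import Mathlib

section
/- Under the stated assumptions, √n · [ (R(N(n·m̂_{u_n}, n·ŝ_{u_n}²)) − R(N(n·m, n·s²)))/n − (m̂_{u_n} − m) ] converges to 0 P-almost surely as n → ∞; that is, (1/n)(R(N(n·m̂_{u_n}, n·ŝ_{u_n}²)) − R(N(n·m, n·s²))) = (m̂_{u_n} − m) + o_{P-a.s.}(n^{−1/2}). -/
open MeasureTheory ProbabilityTheory Filter
open scoped ENNReal NNReal Topology

noncomputable section

/-- Distribution function of a Borel measure on ℝ. -/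
def distFun (μ : Measure ℝ) (x : ℝ) : ℝ := (μ (Set.Iic x)).toReal

/-- Nonuniform Kolmogorov distance with weight `x ↦ 1 + |x|^λ`. -/
def kolDist (lam : ℝ) (μ ν : Measure ℝ) : ℝ≥0∞ :=
  ⨆ x : ℝ, ENNReal.ofReal (|distFun μ x - distFun ν x| * (1 + |x| ^ lam))

/-- The set `M₁^λ` of probability measures on ℝ with finite nonuniform
Kolmogorov distance to `δ₀`. -/
def Mlam (lam : ℝ) : Set (Measure ℝ) :=
  {μ | IsProbabilityMeasure μ ∧ kolDist lam μ (Measure.dirac 0) < ⊤}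

/-- The standard normal distribution. -/
def stdNormal : Measure ℝ := gaussianReal 0 1

/-- The normal distribution with mean `a` and variance `v` (Dirac at `a` for `v ≤ 0`). -/
def normalD (a v : ℝ) : Measure ℝ := gaussianReal a v.toNNReal

/-- `n`-fold convolution `μ^{*n}` (with `μ^{*0} := δ₀`). -/
def convPow (μ : Measure ℝ) : ℕ → Measure ℝ
  | 0 => Measure.dirac 0
  | n + 1 => Measure.map (fun p : ℝ × ℝ => p.1 + p.2) ((convPow μ n).prod μ)

/-- Empirical mean `m̂_u` of the first `u` observations. -/
def sampleMean {Ω : Type*} (Y : ℕ → Ω → ℝ) (u : ℕ) (ω : Ω) : ℝ :=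
  (∑ i ∈ Finset.range u, Y i ω) / u

/-- Empirical standard deviation `ŝ_u` of the first `u` observations. -/
def sampleSD {Ω : Type*} (Y : ℕ → Ω → ℝ) (u : ℕ) (ω : Ω) : ℝ :=
  Real.sqrt ((∑ i ∈ Finset.range u, (Y i ω - sampleMean Y u ω) ^ 2) / u)

/-- Empirical measure `μ̂_u` of the first `u` observations. -/
def empMeas {Ω : Type*} (Y : ℕ → Ω → ℝ) (u : ℕ) (ω : Ω) : Measure ℝ :=
  (u : ℝ≥0∞)⁻¹ • ∑ i ∈ Finset.range u, Measure.dirac (Y i ω)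

/-!
Applying cash additivity to the standard normal law (which lies in `M₁^λ` by Markov's inequality
for its `λ`-th moment) gives `R (N(a, v)) = √v · R (N(0,1)) + a`. Hence the rescaled difference
is exactly `(ŝ_{u_n} - s) · R (N(0,1))`, and `ŝ_u → s` almost surely by the strong law of large
numbers for `Y_i` and `Y_i²`.
-/

lemma abs_distFun_sub_distFun_dirac_le (𝔪 : Measure ℝ) [IsProbabilityMeasure 𝔪] (x : ℝ) :
    |distFun 𝔪 x - distFun (Measure.dirac 0) x| ≤ 𝔪.real {y | |x| ≤ |y|} := by
  have hF : distFun 𝔪 x = 𝔪.real (Set.Iic x) := rfl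
  rcases le_or_gt 0 x with hx | hx
  · have hH : distFun (Measure.dirac 0) x = 1 := by simp [distFun, hx]
    have htail : 1 - distFun 𝔪 x = 𝔪.real (Set.Ioi x) := by
      rw [hF, ← Set.compl_Iic, measureReal_compl measurableSet_Iic, probReal_univ]
    rw [hH, abs_sub_comm, abs_of_nonneg (by rw [htail]; exact measureReal_nonneg), htail]
    refine measureReal_mono fun y (hy : x < y) => ?_
    change |x| ≤ |y|
    rw [abs_of_nonneg hx, abs_of_pos (hx.trans_lt hy)]
    exact hy.le
  · have hH : distFun (Measure.dirac 0) x = 0 := by simp [distFun, hx.not_ge]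
    rw [hH, sub_zero, hF, abs_of_nonneg measureReal_nonneg]
    refine measureReal_mono fun y (hy : y ≤ x) => ?_
    change |x| ≤ |y|
    rw [abs_of_neg hx, abs_of_neg (hy.trans_lt hx)]
    exact neg_le_neg hy

lemma measureReal_abs_ge_mul_rpow_le {lam : ℝ} (hlam : 0 ≤ lam) (𝔪 : Measure ℝ)
    [IsFiniteMeasure 𝔪] (h : Integrable (fun y => |y| ^ lam) 𝔪) (x : ℝ) :
    𝔪.real {y | |x| ≤ |y|} * |x| ^ lam ≤ ∫ y, |y| ^ lam ∂𝔪 := by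
  have hsub : {y | |x| ≤ |y|} ⊆ {y | |x| ^ lam ≤ |y| ^ lam} :=
    fun y (hy : |x| ≤ |y|) => Real.rpow_le_rpow (abs_nonneg x) hy hlam
  calc 𝔪.real {y | |x| ≤ |y|} * |x| ^ lam
      ≤ 𝔪.real {y | |x| ^ lam ≤ |y| ^ lam} * |x| ^ lam :=
        mul_le_mul_of_nonneg_right (measureReal_mono hsub) (by positivity)
    _ ≤ ∫ y, |y| ^ lam ∂𝔪 := by
        rw [mul_comm]
        exact mul_meas_ge_le_integral_of_nonneg
          (ae_of_all _ fun y => Real.rpow_nonneg (abs_nonneg y) lam) h _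

lemma mem_Mlam_of_integrable_abs_rpow {lam : ℝ} (hlam : 0 ≤ lam) (𝔪 : Measure ℝ)
    [IsProbabilityMeasure 𝔪] (h : Integrable (fun y => |y| ^ lam) 𝔪) : 𝔪 ∈ Mlam lam := by
  refine ⟨inferInstance, lt_of_le_of_lt ?_ (ENNReal.ofReal_lt_top (r := 1 + ∫ y, |y| ^ lam ∂𝔪))⟩
  refine iSup_le fun x => ENNReal.ofReal_le_ofReal ?_
  have hdist := abs_distFun_sub_distFun_dirac_le 𝔪 x
  have htail := measureReal_abs_ge_mul_rpow_le hlam 𝔪 h x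
  have hone : |distFun 𝔪 x - distFun (Measure.dirac 0) x| ≤ 1 := hdist.trans measureReal_le_one
  have hpow : 0 ≤ |x| ^ lam := by positivity
  nlinarith

lemma stdNormal_mem_Mlam {lam : ℝ} (hlam : 0 < lam) : stdNormal ∈ Mlam lam := by
  have : IsProbabilityMeasure stdNormal := by unfold stdNormal; infer_instance
  refine mem_Mlam_of_integrable_abs_rpow hlam.le _ ?_
  simpa [stdNormal, hlam.le] using
    (memLp_id_gaussianReal (μ := 0) (v := 1) lam.toNNReal).integrable_norm_rpow
      (by simpa using hlam) (by simp)

lemma normalD_eq_map_stdNormal (a : ℝ) {v : ℝ} (hv : 0 ≤ v) :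
    normalD a v = stdNormal.map (fun x => √v * x + a) := by
  have hcomp : (fun x : ℝ => √v * x + a) = (· + a) ∘ (√v * ·) := rfl
  rw [hcomp, ← Measure.map_map (measurable_add_const a) (measurable_const_mul _), stdNormal,
    gaussianReal_map_const_mul, gaussianReal_map_add_const, normalD]
  congr 1
  · ring
  · ext
    simp [Real.sq_sqrt hv, hv]

section CashAdditive

variable {lam : ℝ} {R : Measure ℝ → ℝ}

lemma apply_normalD_of_cashAdditive (hlam : 0 < lam)
    (hcash : ∀ 𝔪 ∈ Mlam lam, ∀ a b : ℝ, 0 ≤ a →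
      R (Measure.map (fun x => a * x + b) 𝔪) = a * R 𝔪 + b)
    (a : ℝ) {v : ℝ} (hv : 0 ≤ v) : R (normalD a v) = √v * R stdNormal + a := by
  rw [normalD_eq_map_stdNormal a hv]
  exact hcash stdNormal (stdNormal_mem_Mlam hlam) _ a (Real.sqrt_nonneg v)

lemma sqrt_mul_normalD_diff_of_cashAdditive (hlam : 0 < lam)
    (hcash : ∀ 𝔪 ∈ Mlam lam, ∀ a b : ℝ, 0 ≤ a →
      R (Measure.map (fun x => a * x + b) 𝔪) = a * R 𝔪 + b)
    {n : ℝ} (hn : 0 < n) (a b : ℝ) {t s : ℝ} (ht : 0 ≤ t) (hs : 0 ≤ s) :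
    √n * ((R (normalD (n * a) (n * t ^ 2)) - R (normalD (n * b) (n * s ^ 2))) / n - (a - b))
      = (t - s) * R stdNormal := by
  rw [apply_normalD_of_cashAdditive hlam hcash _ (by positivity),
    apply_normalD_of_cashAdditive hlam hcash _ (by positivity),
    Real.sqrt_mul hn.le, Real.sqrt_mul hn.le, Real.sqrt_sq ht, Real.sqrt_sq hs]
  have hsq : √n * √n = n := Real.mul_self_sqrt hn.le
  field_simp
  linear_combination (t - s) * R stdNormal * hsq

end CashAdditive

lemma sampleSD_eq_sqrt {Ω : Type*} (Y : ℕ → Ω → ℝ) (k : ℕ) (ω : Ω) :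
    sampleSD Y k ω = √((∑ i ∈ Finset.range k, Y i ω ^ 2) / k - sampleMean Y k ω ^ 2) := by
  rcases Nat.eq_zero_or_pos k with rfl | hk
  · simp [sampleSD, sampleMean]
  rw [sampleSD, sampleMean]
  congr 1
  have hk' : (k : ℝ) ≠ 0 := by positivity
  simp only [sub_sq, Finset.sum_add_distrib, Finset.sum_sub_distrib, ← Finset.sum_mul,
    ← Finset.mul_sum, Finset.sum_const, Finset.card_range, nsmul_eq_mul]
  field_simp
  ring

theorem tendsto_sampleSD_ae {Ω : Type*} [MeasurableSpace Ω] {P : Measure Ω}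
    [IsProbabilityMeasure P] {Y : ℕ → Ω → ℝ} (hY : MemLp (Y 0) 2 P)
    (hindep : Pairwise fun i j => Y i ⟂ᵢ[P] Y j) (hident : ∀ i, IdentDistrib (Y i) (Y 0) P P) :
    ∀ᵐ ω ∂P, Tendsto (fun k => sampleSD Y k ω) atTop (𝓝 √(Var[Y 0; P])) := by
  have hsq : Measurable fun x : ℝ => x ^ 2 := measurable_id.pow_const 2
  have hmean := strong_law_ae_real Y (hY.integrable one_le_two) hindep hident
  have hsecond := strong_law_ae_real (fun i ω => Y i ω ^ 2) hY.integrable_sq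
    (fun i j hij => (hindep hij).comp hsq hsq) fun i => (hident i).comp hsq
  filter_upwards [hmean, hsecond] with ω hmeanω hsecondω
  simp_rw [sampleSD_eq_sqrt, variance_eq_sub hY]
  exact ((hsecondω.sub (hmeanω.pow 2)).sqrt).congr fun k => by simp [sampleMean]

lemma tendsto_atTop_of_tendsto_div_natCast {u : ℕ → ℕ} {c : ℝ} (hc : 0 < c)
    (hu : Tendsto (fun n : ℕ => (u n : ℝ) / n) atTop (𝓝 c)) : Tendsto u atTop atTop := by
  refine tendsto_natCast_atTop_iff.mp <|
    (hu.pos_mul_atTop hc tendsto_natCast_atTop_atTop).congr' ?_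
  filter_upwards [eventually_gt_atTop 0] with n hn
  field_simp

lemma memLp_two_of_integrable_abs_rpow {μ : Measure ℝ} [IsFiniteMeasure μ] {lam : ℝ}
    (hlam : 2 ≤ lam) (h : Integrable (fun x => |x| ^ lam) μ) : MemLp id 2 μ := by
  have hLp : MemLp id (ENNReal.ofReal lam) μ :=
    (integrable_norm_rpow_iff aestronglyMeasurable_id (by simp; linarith) (by simp)).mp
      (by simpa [ENNReal.toReal_ofReal (by linarith : 0 ≤ lam)] using h)
  exact hLp.mono_exponent (by simpa using ENNReal.ofReal_le_ofReal hlam)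

theorem estimated_normal_approx_vs_exact_normal_general
    (lam : ℝ) (hlam : 2 < lam)
    (R : Measure ℝ → ℝ)
    (hcash : ∀ 𝔪 ∈ Mlam lam, ∀ a b : ℝ, 0 ≤ a →
      R (Measure.map (fun x => a * x + b) 𝔪) = a * R 𝔪 + b)
    {Ω : Type*} [MeasurableSpace Ω] (P : Measure Ω) [IsProbabilityMeasure P]
    (Y : ℕ → Ω → ℝ) (hYmeas : ∀ i, Measurable (Y i))
    (hYindep : iIndepFun Y P)
    (μ : Measure ℝ) [IsProbabilityMeasure μ] (hYlaw : ∀ i, Measure.map (Y i) P = μ)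
    (m s : ℝ) (hs : s = Real.sqrt (variance id μ))
    (hmom : Integrable (fun x => |x| ^ lam) μ)
    (u : ℕ → ℕ)
    (c : ℝ) (hcpos : 0 < c)
    (huc : Tendsto (fun n : ℕ => (u n : ℝ) / n) atTop (𝓝 c))
    :
    ∀ᵐ ω ∂P, Tendsto (fun n : ℕ =>
      Real.sqrt n *
        ((R (normalD ((n : ℝ) * sampleMean Y (u n) ω) ((n : ℝ) * (sampleSD Y (u n) ω) ^ 2))
            - R (normalD ((n : ℝ) * m) ((n : ℝ) * s ^ 2))) / n
          - (sampleMean Y (u n) ω - m)))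
      atTop (𝓝 0) := by
  have hY0 : MemLp (Y 0) 2 P := by
    have h := memLp_two_of_integrable_abs_rpow hlam.le hmom
    rw [← hYlaw 0] at h
    exact (memLp_map_measure_iff aestronglyMeasurable_id (hYmeas 0).aemeasurable).mp h
  have hvar : Var[Y 0; P] = variance id μ := by
    rw [← hYlaw 0, variance_map aemeasurable_id (hYmeas 0).aemeasurable]
    rfl
  have hident : ∀ i, IdentDistrib (Y i) (Y 0) P P :=
    fun i => ⟨(hYmeas i).aemeasurable, (hYmeas 0).aemeasurable, by rw [hYlaw i, hYlaw 0]⟩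
  filter_upwards [tendsto_sampleSD_ae hY0 (fun i j hij => hYindep.indepFun hij) hident]
    with ω hω
  rw [hvar, ← hs] at hω
  have hlim := ((hω.comp (tendsto_atTop_of_tendsto_div_natCast hcpos huc)).sub_const s).mul_const
    (R stdNormal)
  rw [sub_self, zero_mul] at hlim
  refine hlim.congr' ?_
  filter_upwards [eventually_gt_atTop 0] with n hn
  exact (sqrt_mul_normalD_diff_of_cashAdditive (by linarith) hcash (by positivity) _ _
    (Real.sqrt_nonneg _) (hs ▸ Real.sqrt_nonneg _)).symm

/-- Theorem 2.2(i): `(R(N(n·m̂,n·ŝ²)) − R(N(n·m,n·s²)))/n = (m̂_{u_n} − m) + o_{P-a.s.}(n^{-1/2})`. -/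
theorem estimated_normal_approx_vs_exact_normal
    (lam : ℝ) (hlam : 2 < lam)
    (R : Measure ℝ → ℝ)
    (hcash : ∀ 𝔪 ∈ Mlam lam, ∀ a b : ℝ, 0 ≤ a →
      R (Measure.map (fun x => a * x + b) 𝔪) = a * R 𝔪 + b)
    (C₀ β δ : ℝ) (hC₀ : 0 < C₀) (hβ : 0 < β) (hδ : 0 < δ)
    (hd : ∀ 𝔪 ∈ Mlam lam, kolDist lam 𝔪 stdNormal ≤ ENNReal.ofReal δ →
      |R 𝔪 - R stdNormal| ≤ C₀ * (kolDist lam 𝔪 stdNormal).toReal ^ β)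
    {Ω : Type*} [MeasurableSpace Ω] (P : Measure Ω) [IsProbabilityMeasure P]
    (Y : ℕ → Ω → ℝ) (hYmeas : ∀ i, Measurable (Y i))
    (hYindep : iIndepFun Y P)
    (μ : Measure ℝ) [IsProbabilityMeasure μ] (hYlaw : ∀ i, Measure.map (Y i) P = μ)
    (m s : ℝ) (hm : m = ∫ x, x ∂μ) (hs : s = Real.sqrt (variance id μ))
    (hvar : 0 < variance id μ)
    (hmom : Integrable (fun x => |x| ^ lam) μ)
    (u : ℕ → ℕ) (hupos : ∀ n, 0 < u n)
    (c : ℝ) (hcpos : 0 < c)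
    (huc : Tendsto (fun n : ℕ => (u n : ℝ) / n) atTop (𝓝 c))
    :
    ∀ᵐ ω ∂P, Tendsto (fun n : ℕ =>
      Real.sqrt n *
        ((R (normalD ((n : ℝ) * sampleMean Y (u n) ω) ((n : ℝ) * (sampleSD Y (u n) ω) ^ 2))
            - R (normalD ((n : ℝ) * m) ((n : ℝ) * s ^ 2))) / n
          - (sampleMean Y (u n) ω - m)))
      atTop (𝓝 0) :=
  estimated_normal_approx_vs_exact_normal_general lam hlam R hcash P Y hYmeas hYindep μ hYlaw m s hs
    hmom u c hcpos huc
end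
end

section
/- Let g : [0,1] → [0,1] be convex and nondecreasing with g(0) = 0 and g(1) = 1, and suppose there exist constants L, β > 0 such that 1 − g(t) ≤ L·(1 − t)^β for all t ∈ [0,1]. Then |g(t) − g(t′)| ≤ L·|t − t′|^β for all t, t′ ∈ [0,1]. -/
/-!
Increments of a convex function over intervals of equal length grow as the interval moves
to the right. Hence for `t ≤ t'` in `[0, 1]`,
`0 ≤ g t' - g t ≤ g 1 - g (1 - (t' - t)) = 1 - g (1 - (t' - t)) ≤ L (t' - t) ^ β`,
the first inequality by monotonicity and the last by the tail bound.
-/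

open MeasureTheory ProbabilityTheory Filter
open scoped ENNReal NNReal Topology

noncomputable section

theorem ConvexOn.add_le_add_of_le_of_add_eq {𝕜 : Type*} [Field 𝕜] [LinearOrder 𝕜]
    [IsStrictOrderedRing 𝕜] {s : Set 𝕜} {f : 𝕜 → 𝕜} (hf : ConvexOn 𝕜 s f) {x y z w : 𝕜}
    (hx : x ∈ s) (hw : w ∈ s) (hxy : x ≤ y) (hxz : x ≤ z) (hsum : y + z = x + w) :
    f y + f z ≤ f x + f w := by
  rcases hxy.eq_or_lt with rfl | hxy
  · rw [add_left_cancel hsum]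
  have hzw : z < w := by linarith
  have hy : y ∈ s := hf.1.ordConnected.out hx hw ⟨hxy.le, by linarith⟩
  have hz : z ∈ s := hf.1.ordConnected.out hx hw ⟨hxz, hzw.le⟩
  -- the secants over `[x, y]` and `[z, w]` have the same length `y - x = w - z`
  have hslope : (f y - f x) / (y - x) ≤ (f w - f z) / (y - x) :=
    calc (f y - f x) / (y - x)
        ≤ (f w - f x) / (w - x) :=
          hf.secant_mono hx hy hw hxy.ne' (by linarith) (by linarith)
      _ = (f x - f w) / (x - w) := by rw [← neg_div_neg_eq, neg_sub, neg_sub]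
      _ ≤ (f z - f w) / (z - w) := hf.secant_mono hw hx hz (by linarith) hzw.ne hxz
      _ = (f w - f z) / (y - x) := by rw [← neg_div_neg_eq, neg_sub]; congr 1; linarith
  linarith [(div_le_div_iff_of_pos_right (sub_pos.2 hxy)).1 hslope]

theorem convex_distortion_holder_general
    (g : ℝ → ℝ) (hg_mono : MonotoneOn g (Set.Icc 0 1))
    (hg_conv : ConvexOn ℝ (Set.Icc 0 1) g)
    (hg1 : g 1 = 1)
    (L β : ℝ)
    (hdom : ∀ t ∈ Set.Icc (0 : ℝ) 1, 1 - g t ≤ L * (1 - t) ^ β) :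
    ∀ t ∈ Set.Icc (0 : ℝ) 1, ∀ t' ∈ Set.Icc (0 : ℝ) 1,
      |g t - g t'| ≤ L * |t - t'| ^ β := by
  intro t ht t' ht'
  wlog htt : t ≤ t' generalizing t t'
  · rw [abs_sub_comm, abs_sub_comm t]
    exact this t' ht' t ht (le_of_not_ge htt)
  have hs : 1 - (t' - t) ∈ Set.Icc (0 : ℝ) 1 := ⟨by linarith [ht.1, ht'.2], by linarith⟩
  have hinc : g t' - g t ≤ 1 - g (1 - (t' - t)) := by
    have := hg_conv.add_le_add_of_le_of_add_eq (z := 1 - (t' - t)) ht ⟨zero_le_one, le_rfl⟩ htt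
      (by linarith [ht'.2]) (by ring)
    linarith
  calc |g t - g t'| = g t' - g t := by
        rw [abs_sub_comm, abs_of_nonneg (sub_nonneg.2 (hg_mono ht ht' htt))]
    _ ≤ L * (1 - (1 - (t' - t))) ^ β := hinc.trans (hdom _ hs)
    _ = L * |t - t'| ^ β := by rw [sub_sub_cancel, abs_sub_comm, abs_of_nonneg (by linarith)]

/-- A convex distortion function with `1 - g(t) ≤ L(1-t)^β` is `β`-Hölder with constant `L`. -/
theorem convex_distortion_holder
    (g : ℝ → ℝ) (hg_mono : MonotoneOn g (Set.Icc 0 1))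
    (hg_conv : ConvexOn ℝ (Set.Icc 0 1) g)
    (hg0 : g 0 = 0) (hg1 : g 1 = 1)
    (L β : ℝ) (hL : 0 < L) (hβ : 0 < β)
    (hdom : ∀ t ∈ Set.Icc (0 : ℝ) 1, 1 - g t ≤ L * (1 - t) ^ β) :
    ∀ t ∈ Set.Icc (0 : ℝ) 1, ∀ t' ∈ Set.Icc (0 : ℝ) 1,
      |g t - g t'| ≤ L * |t - t'| ^ β :=
  convex_distortion_holder_general g hg_mono hg_conv hg1 L β hdom
end
end

section
/- Let g be a distortion function satisfying |g(t) − g(t′)| ≤ L·|t − t′|^β for all t, t′ ∈ [0,1], where L, β > 0, and let λ > 0 with λβ > 1. Then C := L·∫_ℝ (1 + |x|^λ)^{−β} dx is finite, and for all 𝔪₁, 𝔪₂ ∈ M₁^λ the values R_g(𝔪₁) and R_g(𝔪₂) are finite and satisfy |R_g(𝔪₁) − R_g(𝔪₂)| ≤ ∫_ℝ |g(F₁(x)) − g(F₂(x))| dx ≤ C·d_λ(𝔪₁, 𝔪₂)^β, where F₁, F₂ are the distribution functions of 𝔪₁, 𝔪₂. -/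
/-!
Hölder continuity of `g` turns the weighted bound
`|F₁(x) - F₂(x)| ≤ d_λ(𝔪₁, 𝔪₂) (1 + |x|^λ)⁻¹` into the pointwise bound
`|g(F₁(x)) - g(F₂(x))| ≤ L d_λ(𝔪₁, 𝔪₂)^β (1 + |x|^λ)^(-β)`, whose right side is integrable
because `(1 + |x|^λ)^(-β) ≤ 2^(λβ) (1 + |x|)^(-λβ)` and `λβ > 1`. Taking `𝔪₂ = δ₀`, for which
`g ∘ F₂` is the indicator of `[0, ∞)`, shows that `R_g(𝔪₁)` is finite, and
`R_g(𝔪₁) - R_g(𝔪₂) = -∫ (g ∘ F₁ - g ∘ F₂)`. Finally `d_λ(𝔪₁, 𝔪₂)` is finite by the triangle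
inequality through `δ₀`.
-/

open MeasureTheory ProbabilityTheory Filter
open scoped ENNReal NNReal Topology

noncomputable section

/-- Distortion risk functional `R_g(𝔪) = -∫_{-∞}^0 g(F(x))dx + ∫_0^∞ (1-g(F(x)))dx`. -/
def distRisk (g : ℝ → ℝ) (𝔪 : Measure ℝ) : ℝ :=
  -(∫ x in Set.Iio (0 : ℝ), g (distFun 𝔪 x)) + ∫ x in Set.Ioi (0 : ℝ), (1 - g (distFun 𝔪 x))


open Set

lemma one_add_abs_rpow_le_two_rpow_mul {lam : ℝ} (hlam : 0 ≤ lam) (x : ℝ) :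
    (1 + |x|) ^ lam ≤ 2 ^ lam * (1 + |x| ^ lam) := by
  have hmax : 1 + |x| ≤ 2 * max 1 |x| := by
    linarith [le_max_left 1 |x|, le_max_right 1 |x|]
  calc (1 + |x|) ^ lam ≤ (2 * max 1 |x|) ^ lam :=
        Real.rpow_le_rpow (by positivity) hmax hlam
    _ = 2 ^ lam * max 1 (|x| ^ lam) := by
        rw [Real.mul_rpow zero_le_two (by positivity),
          Real.rpow_max zero_le_one (abs_nonneg x) hlam, Real.one_rpow]
    _ ≤ 2 ^ lam * (1 + |x| ^ lam) := by
        gcongr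
        exact max_le (by linarith [Real.rpow_nonneg (abs_nonneg x) lam]) (by linarith)

theorem integrable_one_add_abs_rpow_rpow_neg {lam β : ℝ} (hβ : 0 < β) (hlb : 1 < lam * β) :
    Integrable (fun x : ℝ => (1 + |x| ^ lam) ^ (-β)) := by
  have hlam : 0 < lam := pos_of_mul_pos_left (by linarith) hβ.le
  refine ((integrable_one_add_norm (μ := volume) (r := lam * β) (by simpa)).const_mul
    ((2 : ℝ) ^ (lam * β))).mono' (by fun_prop : Measurable _).aestronglyMeasurable
    (ae_of_all _ fun x => ?_)
  have hle : 2 ^ (-lam) * (1 + |x|) ^ lam ≤ 1 + |x| ^ lam := by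
    rw [Real.rpow_neg zero_le_two, inv_mul_le_iff₀ (by positivity)]
    exact one_add_abs_rpow_le_two_rpow_mul hlam.le x
  rw [Real.norm_eq_abs, abs_of_nonneg (by positivity), Real.norm_eq_abs]
  calc (1 + |x| ^ lam) ^ (-β) ≤ (2 ^ (-lam) * (1 + |x|) ^ lam) ^ (-β) :=
        Real.rpow_le_rpow_of_nonpos (by positivity) hle (by linarith)
    _ = 2 ^ (lam * β) * (1 + |x|) ^ (-(lam * β)) := by
        rw [Real.mul_rpow (by positivity) (by positivity), ← Real.rpow_mul zero_le_two,
          ← Real.rpow_mul (by positivity)]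
        ring_nf

lemma monotone_distFun (μ : Measure ℝ) [IsFiniteMeasure μ] : Monotone (distFun μ) :=
  fun _ _ hxy => ENNReal.toReal_mono (measure_ne_top μ _) (measure_mono (Iic_subset_Iic.2 hxy))

lemma distFun_mem_Icc (μ : Measure ℝ) [IsProbabilityMeasure μ] (x : ℝ) :
    distFun μ x ∈ Icc (0 : ℝ) 1 :=
  ⟨ENNReal.toReal_nonneg, measureReal_le_one⟩

lemma distFun_dirac_zero_of_neg {x : ℝ} (hx : x < 0) : distFun (Measure.dirac 0) x = 0 := by
  simp [distFun, hx]

lemma distFun_dirac_zero_of_nonneg {x : ℝ} (hx : 0 ≤ x) : distFun (Measure.dirac 0) x = 1 := by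
  simp [distFun, hx]

lemma abs_sub_distFun_mul_le_kolDist {lam : ℝ} {μ ν : Measure ℝ} (h : kolDist lam μ ν ≠ ⊤)
    (x : ℝ) : |distFun μ x - distFun ν x| * (1 + |x| ^ lam) ≤ (kolDist lam μ ν).toReal := by
  refine (ENNReal.ofReal_le_iff_le_toReal h).1 ?_
  exact le_iSup (fun x => ENNReal.ofReal (|distFun μ x - distFun ν x| * (1 + |x| ^ lam))) x

lemma kolDist_le_add (lam : ℝ) (μ ν κ : Measure ℝ) :
    kolDist lam μ ν ≤ kolDist lam μ κ + kolDist lam ν κ := by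
  refine iSup_le fun x => ?_
  have htri : |distFun μ x - distFun ν x| ≤
      |distFun μ x - distFun κ x| + |distFun ν x - distFun κ x| :=
    (abs_sub_le _ (distFun κ x) _).trans_eq (by rw [abs_sub_comm (distFun κ x)])
  calc ENNReal.ofReal (|distFun μ x - distFun ν x| * (1 + |x| ^ lam))
      ≤ ENNReal.ofReal (|distFun μ x - distFun κ x| * (1 + |x| ^ lam)) +
        ENNReal.ofReal (|distFun ν x - distFun κ x| * (1 + |x| ^ lam)) := by
        rw [← ENNReal.ofReal_add (by positivity) (by positivity), ← add_mul]
        gcongr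
    _ ≤ kolDist lam μ κ + kolDist lam ν κ :=
        add_le_add (le_iSup (fun x => ENNReal.ofReal _) x) (le_iSup (fun x => ENNReal.ofReal _) x)

lemma kolDist_ne_top_of_mem_Mlam {lam : ℝ} {μ ν : Measure ℝ} (hμ : μ ∈ Mlam lam)
    (hν : ν ∈ Mlam lam) : kolDist lam μ ν ≠ ⊤ :=
  ne_top_of_le_ne_top (ENNReal.add_ne_top.2 ⟨hμ.2.ne, hν.2.ne⟩) (kolDist_le_add lam μ ν _)

lemma rpow_le_rpow_mul_rpow_neg_of_mul_le {a w D β : ℝ} (hβ : 0 ≤ β) (ha : 0 ≤ a) (hw : 0 < w)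
    (h : a * w ≤ D) : a ^ β ≤ D ^ β * w ^ (-β) := by
  rw [Real.rpow_neg hw.le, ← div_eq_mul_inv, le_div_iff₀ (by positivity), ← Real.mul_rpow ha hw.le]
  exact Real.rpow_le_rpow (by positivity) h hβ

section Holder

variable {g : ℝ → ℝ} {L β lam : ℝ} {μ ν : Measure ℝ} [IsProbabilityMeasure μ]
  [IsProbabilityMeasure ν]

lemma abs_sub_comp_distFun_le (hL : 0 ≤ L) (hβ : 0 ≤ β)
    (hHolder : ∀ t ∈ Icc (0 : ℝ) 1, ∀ t' ∈ Icc (0 : ℝ) 1, |g t - g t'| ≤ L * |t - t'| ^ β)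
    (h : kolDist lam μ ν ≠ ⊤) (x : ℝ) :
    |g (distFun μ x) - g (distFun ν x)| ≤
      L * (kolDist lam μ ν).toReal ^ β * (1 + |x| ^ lam) ^ (-β) := by
  calc |g (distFun μ x) - g (distFun ν x)|
      ≤ L * |distFun μ x - distFun ν x| ^ β :=
        hHolder _ (distFun_mem_Icc μ x) _ (distFun_mem_Icc ν x)
    _ ≤ L * ((kolDist lam μ ν).toReal ^ β * (1 + |x| ^ lam) ^ (-β)) := by
        gcongr
        exact rpow_le_rpow_mul_rpow_neg_of_mul_le hβ (abs_nonneg _) (by positivity)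
          (abs_sub_distFun_mul_le_kolDist h x)
    _ = _ := (mul_assoc _ _ _).symm

lemma integrable_sub_comp_distFun (hg : MonotoneOn g (Icc 0 1)) (hL : 0 ≤ L) (hβ : 0 ≤ β)
    (hHolder : ∀ t ∈ Icc (0 : ℝ) 1, ∀ t' ∈ Icc (0 : ℝ) 1, |g t - g t'| ≤ L * |t - t'| ^ β)
    (hW : Integrable (fun x : ℝ => (1 + |x| ^ lam) ^ (-β))) (h : kolDist lam μ ν ≠ ⊤) :
    Integrable (fun x => g (distFun μ x) - g (distFun ν x)) := by
  have hmeas : ∀ (κ : Measure ℝ) [IsProbabilityMeasure κ], Measurable fun x => g (distFun κ x) :=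
    fun κ _ => Monotone.measurable fun x y hxy =>
      hg (distFun_mem_Icc κ x) (distFun_mem_Icc κ y) (monotone_distFun κ hxy)
  refine (hW.const_mul (L * (kolDist lam μ ν).toReal ^ β)).mono'
    ((hmeas μ).sub (hmeas ν)).aestronglyMeasurable (ae_of_all _ fun x => ?_)
  exact abs_sub_comp_distFun_le hL hβ hHolder h x

lemma integral_abs_sub_comp_distFun_le (hL : 0 ≤ L) (hβ : 0 ≤ β)
    (hHolder : ∀ t ∈ Icc (0 : ℝ) 1, ∀ t' ∈ Icc (0 : ℝ) 1, |g t - g t'| ≤ L * |t - t'| ^ β)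
    (hW : Integrable (fun x : ℝ => (1 + |x| ^ lam) ^ (-β))) (h : kolDist lam μ ν ≠ ⊤) :
    ∫ x, |g (distFun μ x) - g (distFun ν x)| ≤
      (L * ∫ x, (1 + |x| ^ lam) ^ (-β)) * (kolDist lam μ ν).toReal ^ β := by
  calc ∫ x, |g (distFun μ x) - g (distFun ν x)|
      ≤ ∫ x, L * (kolDist lam μ ν).toReal ^ β * (1 + |x| ^ lam) ^ (-β) :=
        integral_mono_of_nonneg (ae_of_all _ fun _ => abs_nonneg _) (hW.const_mul _)
          (ae_of_all _ (abs_sub_comp_distFun_le hL hβ hHolder h))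
    _ = (L * ∫ x, (1 + |x| ^ lam) ^ (-β)) * (kolDist lam μ ν).toReal ^ β := by
        rw [integral_const_mul]; ring

end Holder

lemma integrableOn_distRisk_of_mem_Mlam {g : ℝ → ℝ} {L β lam : ℝ} {𝔪 : Measure ℝ}
    (hg : MonotoneOn g (Icc 0 1)) (hg0 : g 0 = 0) (hg1 : g 1 = 1) (hL : 0 ≤ L) (hβ : 0 ≤ β)
    (hHolder : ∀ t ∈ Icc (0 : ℝ) 1, ∀ t' ∈ Icc (0 : ℝ) 1, |g t - g t'| ≤ L * |t - t'| ^ β)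
    (hW : Integrable (fun x : ℝ => (1 + |x| ^ lam) ^ (-β))) (h𝔪 : 𝔪 ∈ Mlam lam) :
    IntegrableOn (fun x => g (distFun 𝔪 x)) (Iio 0) volume ∧
      IntegrableOn (fun x => 1 - g (distFun 𝔪 x)) (Ioi 0) volume := by
  have := h𝔪.1
  have hI := integrable_sub_comp_distFun hg hL hβ hHolder hW h𝔪.2.ne
  refine ⟨hI.integrableOn.congr_fun (fun x hx => ?_) measurableSet_Iio,
    hI.integrableOn.neg.congr_fun (fun x hx => ?_) measurableSet_Ioi⟩
  · simp [distFun_dirac_zero_of_neg hx, hg0]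
  · simp [distFun_dirac_zero_of_nonneg (le_of_lt hx), hg1]

lemma distRisk_sub_distRisk {g : ℝ → ℝ} {μ ν : Measure ℝ}
    (hμ : IntegrableOn (fun x => g (distFun μ x)) (Iio 0) volume ∧
      IntegrableOn (fun x => 1 - g (distFun μ x)) (Ioi 0) volume)
    (hν : IntegrableOn (fun x => g (distFun ν x)) (Iio 0) volume ∧
      IntegrableOn (fun x => 1 - g (distFun ν x)) (Ioi 0) volume) :
    distRisk g μ - distRisk g ν = -∫ x, (g (distFun μ x) - g (distFun ν x)) := by
  obtain ⟨hμ₀, hμ₁⟩ := hμ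
  obtain ⟨hν₀, hν₁⟩ := hν
  have hIoi : ∫ x in Ioi 0, (g (distFun μ x) - g (distFun ν x)) =
      (∫ x in Ioi 0, (1 - g (distFun ν x))) - ∫ x in Ioi 0, (1 - g (distFun μ x)) := by
    rw [← integral_sub hν₁ hμ₁]
    congr with x
    ring
  have hIoi' : IntegrableOn (fun x => g (distFun μ x) - g (distFun ν x)) (Ioi 0) volume := by
    refine (hν₁.sub hμ₁).congr_fun (fun x _ => ?_) measurableSet_Ioi
    simp only [Pi.sub_apply]
    ring
  rw [← intervalIntegral.integral_Iic_add_Ioi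
      (Iff.mpr integrableOn_Iic_iff_integrableOn_Iio (hμ₀.sub hν₀)) hIoi',
    integral_Iic_eq_integral_Iio, integral_sub hμ₀ hν₀, hIoi, distRisk, distRisk]
  ring

theorem holder_distortion_risk_bound_general
    (g : ℝ → ℝ) (hg_mono : MonotoneOn g (Set.Icc 0 1))
    (hg0 : g 0 = 0) (hg1 : g 1 = 1)
    (L β : ℝ) (hL : 0 < L) (hβ : 0 < β)
    (hHolder : ∀ t ∈ Set.Icc (0 : ℝ) 1, ∀ t' ∈ Set.Icc (0 : ℝ) 1,
      |g t - g t'| ≤ L * |t - t'| ^ β)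
    (lam : ℝ) (hlb : 1 < lam * β) :
    Integrable (fun x : ℝ => (1 + |x| ^ lam) ^ (-β)) ∧
    ∀ 𝔪₁ ∈ Mlam lam, ∀ 𝔪₂ ∈ Mlam lam,
      (IntegrableOn (fun x => g (distFun 𝔪₁ x)) (Set.Iio 0) volume ∧
        IntegrableOn (fun x => 1 - g (distFun 𝔪₁ x)) (Set.Ioi 0) volume) ∧
      (IntegrableOn (fun x => g (distFun 𝔪₂ x)) (Set.Iio 0) volume ∧
        IntegrableOn (fun x => 1 - g (distFun 𝔪₂ x)) (Set.Ioi 0) volume) ∧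
      |distRisk g 𝔪₁ - distRisk g 𝔪₂| ≤ ∫ x : ℝ, |g (distFun 𝔪₁ x) - g (distFun 𝔪₂ x)| ∧
      (∫ x : ℝ, |g (distFun 𝔪₁ x) - g (distFun 𝔪₂ x)|) ≤
        (L * ∫ x : ℝ, (1 + |x| ^ lam) ^ (-β)) * (kolDist lam 𝔪₁ 𝔪₂).toReal ^ β := by
  have hW := integrable_one_add_abs_rpow_rpow_neg hβ hlb
  refine ⟨hW, fun 𝔪₁ h₁ 𝔪₂ h₂ => ?_⟩
  have hR₁ := integrableOn_distRisk_of_mem_Mlam hg_mono hg0 hg1 hL.le hβ.le hHolder hW h₁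
  have hR₂ := integrableOn_distRisk_of_mem_Mlam hg_mono hg0 hg1 hL.le hβ.le hHolder hW h₂
  have := h₁.1
  have := h₂.1
  refine ⟨hR₁, hR₂, ?_, integral_abs_sub_comp_distFun_le hL.le hβ.le hHolder hW
    (kolDist_ne_top_of_mem_Mlam h₁ h₂)⟩
  rw [distRisk_sub_distRisk hR₁ hR₂, abs_neg]
  exact abs_integral_le_integral_abs

/-- For a `β`-Hölder distortion function `g` and `λβ > 1`, the distortion risk functional is
finite on `M₁^λ` and is Hölder continuous w.r.t. the nonuniform Kolmogorov distance. -/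
theorem holder_distortion_risk_bound
    (g : ℝ → ℝ) (hg_mono : MonotoneOn g (Set.Icc 0 1))
    (hg0 : g 0 = 0) (hg1 : g 1 = 1)
    (L β : ℝ) (hL : 0 < L) (hβ : 0 < β)
    (hHolder : ∀ t ∈ Set.Icc (0 : ℝ) 1, ∀ t' ∈ Set.Icc (0 : ℝ) 1,
      |g t - g t'| ≤ L * |t - t'| ^ β)
    (lam : ℝ) (hlam : 0 < lam) (hlb : 1 < lam * β) :
    Integrable (fun x : ℝ => (1 + |x| ^ lam) ^ (-β)) ∧
    ∀ 𝔪₁ ∈ Mlam lam, ∀ 𝔪₂ ∈ Mlam lam,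
      (IntegrableOn (fun x => g (distFun 𝔪₁ x)) (Set.Iio 0) volume ∧
        IntegrableOn (fun x => 1 - g (distFun 𝔪₁ x)) (Set.Ioi 0) volume) ∧
      (IntegrableOn (fun x => g (distFun 𝔪₂ x)) (Set.Iio 0) volume ∧
        IntegrableOn (fun x => 1 - g (distFun 𝔪₂ x)) (Set.Ioi 0) volume) ∧
      |distRisk g 𝔪₁ - distRisk g 𝔪₂| ≤ ∫ x : ℝ, |g (distFun 𝔪₁ x) - g (distFun 𝔪₂ x)| ∧
      (∫ x : ℝ, |g (distFun 𝔪₁ x) - g (distFun 𝔪₂ x)|) ≤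
        (L * ∫ x : ℝ, (1 + |x| ^ lam) ^ (-β)) * (kolDist lam 𝔪₁ 𝔪₂).toReal ^ β :=
  holder_distortion_risk_bound_general g hg_mono hg0 hg1 L β hL hβ hHolder lam hlb
end
end

section
/- Let p ≥ 1 and a ∈ (0, 1]. The one-sided p-th moment risk measure ρ(X) := E[X] + a·(E[((X − E[X])⁺)^p])^{1/p}, defined for real-valued random variables X with E[|X|^p] < ∞ on a probability space, is a coherent risk measure: it is monotone (X ≤ Y a.s. implies ρ(X) ≤ ρ(Y)), cash additive (ρ(X + b) = ρ(X) + b for all b ∈ ℝ), subadditive (ρ(X + Y) ≤ ρ(X) + ρ(Y)), and positively homogeneous (ρ(cX) = c·ρ(X) for all c ≥ 0). -/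
/-!
Write `ρ(X) = E[X] + a·D(X)` with `D(X) = ‖(X - E[X])⁺‖_p`. Cash additivity and positive
homogeneity are immediate from the formula. Since `(x + y)⁺ ≤ x⁺ + y⁺`, Minkowski's inequality
makes `D` subadditive, hence so is `ρ`. If `X ≤ Y` then `(X - E[X])⁺ ≤ (Y - E[Y])⁺ + (E[Y] - E[X])`,
so `D(X) ≤ D(Y) + E[Y] - E[X]`, and `a ≤ 1` lets the mean increment absorb `a·(E[Y] - E[X])`.
-/

open MeasureTheory ProbabilityTheory Filter
open scoped ENNReal NNReal Topology

noncomputable section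

/-- The one-sided `p`-th moment risk measure `ρ(X) = E[X] + a·E[((X-E[X])⁺)^p]^{1/p}`. -/
def osRisk {Ω : Type*} [MeasurableSpace Ω] (P : Measure Ω) (p a : ℝ) (X : Ω → ℝ) : ℝ :=
  (∫ ω, X ω ∂P) + a * (∫ ω, (max (X ω - ∫ ω', X ω' ∂P) 0) ^ p ∂P) ^ (1 / p)

lemma eLpNorm_toReal_le_add_of_ae_norm_le {α E : Type*} [MeasurableSpace α] {μ : Measure α}
    [NormedAddCommGroup E] {q : ℝ≥0∞} {f g h : α → E} (hq : 1 ≤ q)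
    (hg : MemLp g q μ) (hh : MemLp h q μ) (hfgh : ∀ᵐ x ∂μ, ‖f x‖ ≤ ‖g x + h x‖) :
    (eLpNorm f q μ).toReal ≤ (eLpNorm g q μ).toReal + (eLpNorm h q μ).toReal :=
  ENNReal.toReal_le_add ((eLpNorm_mono_ae hfgh).trans
    (eLpNorm_add_le hg.aestronglyMeasurable hh.aestronglyMeasurable hq)) hg.2.ne hh.2.ne

def upperSemideviation {Ω : Type*} [MeasurableSpace Ω] (P : Measure Ω)
    (q : ℝ≥0∞) (X : Ω → ℝ) : ℝ :=
  (eLpNorm (fun ω => max (X ω - ∫ ω', X ω' ∂P) 0) q P).toReal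

section UpperSemideviation

variable {Ω : Type*} [MeasurableSpace Ω] {P : Measure Ω} [IsProbabilityMeasure P]
  {q : ℝ≥0∞} {X Y : Ω → ℝ}

lemma upperSemideviation_add_le (hq : 1 ≤ q) (hX : MemLp X q P) (hY : MemLp Y q P) :
    upperSemideviation P q (fun ω => X ω + Y ω) ≤
      upperSemideviation P q X + upperSemideviation P q Y := by
  rw [upperSemideviation, integral_add (hX.integrable hq) (hY.integrable hq)]
  refine eLpNorm_toReal_le_add_of_ae_norm_le hq (hX.sub (memLp_const _)).pos_part
    (hY.sub (memLp_const _)).pos_part (ae_of_all _ fun ω => ?_)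
  have hXω := le_max_left (X ω - ∫ ω', X ω' ∂P) 0
  have hYω := le_max_left (Y ω - ∫ ω', Y ω' ∂P) 0
  rw [Real.norm_of_nonneg (le_max_right _ _), Real.norm_of_nonneg (by positivity)]
  exact max_le (by linarith) (by positivity)

lemma upperSemideviation_le_add_integral_sub (hq : 1 ≤ q) (hX : MemLp X q P)
    (hY : MemLp Y q P) (hXY : X ≤ᵐ[P] Y) :
    upperSemideviation P q X ≤
      upperSemideviation P q Y + ((∫ ω, Y ω ∂P) - ∫ ω, X ω ∂P) := by
  set e := (∫ ω, Y ω ∂P) - ∫ ω, X ω ∂P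
  have he : 0 ≤ e := sub_nonneg.2 (integral_mono_ae (hX.integrable hq) (hY.integrable hq) hXY)
  have hconst : (eLpNorm (fun _ : Ω => e) q P).toReal = e := by
    simp [eLpNorm_const e (one_pos.trans_le hq).ne' (IsProbabilityMeasure.ne_zero P),
      abs_of_nonneg he]
  rw [upperSemideviation, upperSemideviation, ← hconst]
  refine eLpNorm_toReal_le_add_of_ae_norm_le hq (hY.sub (memLp_const _)).pos_part
    (memLp_const e) (hXY.mono fun ω hω => ?_)
  have hYω := le_max_left (Y ω - ∫ ω', Y ω' ∂P) 0
  rw [Real.norm_of_nonneg (le_max_right _ _), Real.norm_of_nonneg (by positivity)]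
  exact max_le (by linarith) (by positivity)

end UpperSemideviation

section OsRisk

variable {Ω : Type*} [MeasurableSpace Ω] {P : Measure Ω} {p a : ℝ} {X Y : Ω → ℝ}

lemma osRisk_eq_integral_add_upperSemideviation [IsFiniteMeasure P] (hp : 0 < p)
    (hX : MemLp X (ENNReal.ofReal p) P) :
    osRisk P p a X = (∫ ω, X ω ∂P) + a * upperSemideviation P (ENNReal.ofReal p) X := by
  have hf : MemLp (fun ω => max (X ω - ∫ ω', X ω' ∂P) 0) (ENNReal.ofReal p) P :=
    (hX.sub (memLp_const _)).pos_part
  rw [osRisk, upperSemideviation,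
    hf.eLpNorm_eq_integral_rpow_norm (by simpa using hp) ENNReal.ofReal_ne_top,
    ENNReal.toReal_ofReal hp.le, ENNReal.toReal_ofReal (by positivity), one_div]
  simp only [Real.norm_of_nonneg (le_max_right _ _)]

lemma osRisk_add_const [IsProbabilityMeasure P] (hX : Integrable X P) (b : ℝ) :
    osRisk P p a (fun ω => X ω + b) = osRisk P p a X + b := by
  simp only [osRisk, integral_add hX (integrable_const b), integral_const, probReal_univ,
    one_smul, add_sub_add_right_eq_sub]
  ring

lemma osRisk_const_mul (hp : p ≠ 0) {c : ℝ} (hc : 0 ≤ c) :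
    osRisk P p a (fun ω => c * X ω) = c * osRisk P p a X := by
  have hpow : ∀ ω, max (c * X ω - c * ∫ ω', X ω' ∂P) 0 ^ p =
      c ^ p * max (X ω - ∫ ω', X ω' ∂P) 0 ^ p := fun ω => by
    have hmax : max (c * (X ω - ∫ ω', X ω' ∂P)) 0 = c * max (X ω - ∫ ω', X ω' ∂P) 0 := by
      rw [mul_max_of_nonneg _ _ hc, mul_zero]
    rw [← mul_sub, hmax, Real.mul_rpow hc (le_max_right _ _)]
  simp only [osRisk, integral_const_mul, hpow]
  rw [Real.mul_rpow (by positivity) (integral_nonneg fun ω => by positivity),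
    ← Real.rpow_mul hc, mul_one_div_cancel hp, Real.rpow_one]
  ring

variable [IsProbabilityMeasure P]

lemma osRisk_mono (hp : 1 ≤ p) (ha : a ∈ Set.Icc (0 : ℝ) 1)
    (hX : MemLp X (ENNReal.ofReal p) P) (hY : MemLp Y (ENNReal.ofReal p) P)
    (hXY : X ≤ᵐ[P] Y) : osRisk P p a X ≤ osRisk P p a Y := by
  have hq := ENNReal.one_le_ofReal.2 hp
  have hmean := integral_mono_ae (hX.integrable hq) (hY.integrable hq) hXY
  have hdev := upperSemideviation_le_add_integral_sub hq hX hY hXY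
  rw [osRisk_eq_integral_add_upperSemideviation (one_pos.trans_le hp) hX,
    osRisk_eq_integral_add_upperSemideviation (one_pos.trans_le hp) hY]
  linarith [mul_le_mul_of_nonneg_left hdev ha.1,
    mul_le_mul_of_nonneg_right ha.2 (sub_nonneg.2 hmean)]

lemma osRisk_add_le (hp : 1 ≤ p) (ha : 0 ≤ a)
    (hX : MemLp X (ENNReal.ofReal p) P) (hY : MemLp Y (ENNReal.ofReal p) P) :
    osRisk P p a (fun ω => X ω + Y ω) ≤ osRisk P p a X + osRisk P p a Y := by
  have hq := ENNReal.one_le_ofReal.2 hp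
  have hdev := upperSemideviation_add_le hq hX hY
  rw [osRisk_eq_integral_add_upperSemideviation (X := fun ω => X ω + Y ω) (one_pos.trans_le hp)
      (hX.add hY),
    osRisk_eq_integral_add_upperSemideviation (one_pos.trans_le hp) hX,
    osRisk_eq_integral_add_upperSemideviation (one_pos.trans_le hp) hY,
    integral_add (hX.integrable hq) (hY.integrable hq)]
  linarith [mul_le_mul_of_nonneg_left hdev ha]

end OsRisk

/-- Example 3.3: the one-sided `p`-th moment risk measure is monotone, cash additive,
subadditive and positively homogeneous on `L^p`. -/
theorem oneSided_moment_coherent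
    {Ω : Type*} [MeasurableSpace Ω] (P : Measure Ω) [IsProbabilityMeasure P]
    (p a : ℝ) (hp : 1 ≤ p) (ha : a ∈ Set.Ioc (0 : ℝ) 1) :
    (∀ X Y : Ω → ℝ, MemLp X (ENNReal.ofReal p) P → MemLp Y (ENNReal.ofReal p) P →
      (∀ᵐ ω ∂P, X ω ≤ Y ω) → osRisk P p a X ≤ osRisk P p a Y) ∧
    (∀ X : Ω → ℝ, MemLp X (ENNReal.ofReal p) P → ∀ b : ℝ,
      osRisk P p a (fun ω => X ω + b) = osRisk P p a X + b) ∧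
    (∀ X Y : Ω → ℝ, MemLp X (ENNReal.ofReal p) P → MemLp Y (ENNReal.ofReal p) P →
      osRisk P p a (fun ω => X ω + Y ω) ≤ osRisk P p a X + osRisk P p a Y) ∧
    (∀ X : Ω → ℝ, MemLp X (ENNReal.ofReal p) P → ∀ c : ℝ, 0 ≤ c →
      osRisk P p a (fun ω => c * X ω) = c * osRisk P p a X) := by
  have hq := ENNReal.one_le_ofReal.2 hp
  exact ⟨fun X Y hX hY hXY => osRisk_mono hp (Set.Ioc_subset_Icc_self ha) hX hY hXY,
    fun X hX b => osRisk_add_const (hX.integrable hq) b,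
    fun X Y hX hY => osRisk_add_le hp ha.1.le hX hY,
    fun X _ c hc => osRisk_const_mul (one_pos.trans_le hp).ne' hc⟩
end
end

section
/- Let α ∈ [1/2, 1) and q ∈ [0, 1], and let B be a Bernoulli random variable with P(B = 1) = q and P(B = 0) = 1 − q. Then the function m ↦ α·E[((B − m)⁺)²] + (1 − α)·E[((m − B)⁺)²] on ℝ attains its minimum at the unique point m* = αq / (αq + (1 − α)(1 − q)). Equivalently, for the expectile-based risk measure ρ at level α, the function g_ρ(t) := 1 − ρ(B_{1−t}) satisfies g_ρ(t) = (1 − α)t / (1 − α + (1 − t)(2α − 1)), and consequently 1 − g_ρ(t) ≤ (α/(1 − α))·(1 − t) for all t ∈ [0,1]. -/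
/-!
For a Bernoulli variable the expectile loss is an explicit piecewise quadratic in `m`. On `[0, 1]`
it equals `a (1 - m)² + b m²` with `a = αq`, `b = (1 - α)(1 - q)`, whose vertex
`m* = a / (a + b)` lies in `[0, 1]`; left of `0` and right of `1` the loss strictly exceeds its
value at the nearer endpoint. The statements about `g_ρ` are the case `q = 1 - t`, and the bound
holds because the denominator `α(1 - t) + (1 - α)t` is at least `1 - α` when `α ≥ 1/2`.
-/

open MeasureTheory ProbabilityTheory Filter
open scoped ENNReal NNReal Topology

noncomputable section

/-- The Bernoulli distribution on ℝ with expectation `q`. -/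
def bern (q : ℝ) : Measure ℝ :=
  ENNReal.ofReal (1 - q) • Measure.dirac 0 + ENNReal.ofReal q • Measure.dirac 1

/-- The expectile loss function `m ↦ α·E[((B-m)⁺)²] + (1-α)·E[((m-B)⁺)²]`. -/
def expectileLoss {Ω : Type*} [MeasurableSpace Ω] (P : Measure Ω) (α : ℝ) (B : Ω → ℝ)
    (m : ℝ) : ℝ :=
  α * ∫ ω, (max (B ω - m) 0) ^ 2 ∂P + (1 - α) * ∫ ω, (max (m - B ω) 0) ^ 2 ∂P

lemma bern_eq_bernoulliMeasure {q : ℝ} (hq : q ∈ Set.Icc (0 : ℝ) 1) :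
    bern q = Ber(1, 0, ⟨q, hq⟩) := by
  rw [bern, bernoulliMeasure_def, add_comm]
  congr 2
  · rw [ENNReal.ofReal, Real.toNNReal_of_nonneg hq.1]; rfl
  · rw [ENNReal.ofReal, Real.toNNReal_of_nonneg (sub_nonneg.2 hq.2)]; rfl

lemma integral_bern {q : ℝ} (hq : q ∈ Set.Icc (0 : ℝ) 1) (g : ℝ → ℝ) :
    ∫ x, g x ∂(bern q) = (1 - q) * g 0 + q * g 1 := by
  rw [bern_eq_bernoulliMeasure hq, integral_bernoulliMeasure, smul_eq_mul, smul_eq_mul, add_comm]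

lemma expectileLoss_eq_map {Ω : Type*} [MeasurableSpace Ω] (P : Measure Ω) (α : ℝ)
    {B : Ω → ℝ} (hB : Measurable B) (m : ℝ) :
    expectileLoss P α B m = expectileLoss (P.map B) α id m := by
  simp only [expectileLoss, id]
  rw [integral_map hB.aemeasurable (by fun_prop), integral_map hB.aemeasurable (by fun_prop)]

lemma expectileLoss_bern {q : ℝ} (hq : q ∈ Set.Icc (0 : ℝ) 1) (α m : ℝ) :
    expectileLoss (bern q) α id m =
      α * ((1 - q) * max (-m) 0 ^ 2 + q * max (1 - m) 0 ^ 2) +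
        (1 - α) * ((1 - q) * max m 0 ^ 2 + q * max (m - 1) 0 ^ 2) := by
  simp only [expectileLoss, id, integral_bern hq, zero_sub, sub_zero]

lemma expectileLoss_bern_of_mem_Icc {q : ℝ} (hq : q ∈ Set.Icc (0 : ℝ) 1) (α : ℝ) {m : ℝ}
    (hm : m ∈ Set.Icc (0 : ℝ) 1) :
    expectileLoss (bern q) α id m = α * q * (1 - m) ^ 2 + (1 - α) * (1 - q) * m ^ 2 := by
  rw [expectileLoss_bern hq, max_eq_right (by linarith [hm.1]), max_eq_left (by linarith [hm.2]),
    max_eq_left hm.1, max_eq_right (by linarith [hm.2])]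
  ring

lemma expectileLoss_bern_zero_lt {q : ℝ} (hq : q ∈ Set.Icc (0 : ℝ) 1) {α m : ℝ} (hα : 0 < α)
    (hm : m < 0) : expectileLoss (bern q) α id 0 < expectileLoss (bern q) α id m := by
  simp only [expectileLoss_bern hq, max_eq_left (neg_nonneg.2 hm.le),
    max_eq_left (by linarith : (0 : ℝ) ≤ 1 - m), max_eq_right hm.le,
    max_eq_right (by linarith : m - 1 ≤ 0)]
  norm_num
  nlinarith [hq.1, hq.2, mul_pos hα (mul_pos (neg_pos.2 hm) (neg_pos.2 hm))]

lemma expectileLoss_bern_one_lt {q : ℝ} (hq : q ∈ Set.Icc (0 : ℝ) 1) {α m : ℝ} (hα : α < 1)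
    (hm : 1 < m) : expectileLoss (bern q) α id 1 < expectileLoss (bern q) α id m := by
  simp only [expectileLoss_bern hq, max_eq_right (by linarith : -m ≤ 0),
    max_eq_right (by linarith : 1 - m ≤ 0), max_eq_left (by linarith : (0 : ℝ) ≤ m),
    max_eq_left (by linarith : (0 : ℝ) ≤ m - 1)]
  norm_num
  nlinarith [hq.1, hq.2, mul_pos (sub_pos.2 hα) (mul_pos (sub_pos.2 hm) (sub_pos.2 hm))]

lemma mul_one_sub_sq_add_mul_sq_eq {a b : ℝ} (hab : a + b ≠ 0) (m : ℝ) :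
    a * (1 - m) ^ 2 + b * m ^ 2 = (a + b) * (m - a / (a + b)) ^ 2 + a * b / (a + b) := by
  field_simp
  ring

lemma expectileLoss_bern_lt {α q : ℝ} (hα : α ∈ Set.Ioo (0 : ℝ) 1) (hq : q ∈ Set.Icc (0 : ℝ) 1)
    {m : ℝ} (hm : m ≠ α * q / (α * q + (1 - α) * (1 - q))) :
    expectileLoss (bern q) α id (α * q / (α * q + (1 - α) * (1 - q))) <
      expectileLoss (bern q) α id m := by
  obtain ⟨hα0, hα1⟩ := hα
  obtain ⟨hq0, hq1⟩ := hq
  set a := α * q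
  set b := (1 - α) * (1 - q)
  set c := a / (a + b)
  have ha : 0 ≤ a := by positivity
  have hb : 0 ≤ b := mul_nonneg (by linarith) (by linarith)
  have hab : 0 < a + b := by nlinarith
  have hc : c ∈ Set.Icc (0 : ℝ) 1 := ⟨by positivity, (div_le_one hab).2 (by linarith)⟩
  have hquad : ∀ x ∈ Set.Icc (0 : ℝ) 1,
      expectileLoss (bern q) α id x = expectileLoss (bern q) α id c + (a + b) * (x - c) ^ 2 := by
    intro x hx
    rw [expectileLoss_bern_of_mem_Icc ⟨hq0, hq1⟩ α hx, expectileLoss_bern_of_mem_Icc ⟨hq0, hq1⟩ α hc,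
      mul_one_sub_sq_add_mul_sq_eq hab.ne', mul_one_sub_sq_add_mul_sq_eq hab.ne']
    ring
  rcases lt_or_ge m 0 with hm0 | hm0
  · have := hquad 0 ⟨le_rfl, zero_le_one⟩
    have := expectileLoss_bern_zero_lt ⟨hq0, hq1⟩ hα0 hm0
    linarith [mul_nonneg hab.le (sq_nonneg (0 - c))]
  rcases le_or_gt m 1 with hm1 | hm1
  · rw [hquad m ⟨hm0, hm1⟩]
    have : (m - c) ^ 2 ≠ 0 := pow_ne_zero 2 (sub_ne_zero.2 hm)
    have : 0 < (a + b) * (m - c) ^ 2 := by positivity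
    linarith
  · have := hquad 1 ⟨zero_le_one, le_rfl⟩
    have := expectileLoss_bern_one_lt ⟨hq0, hq1⟩ hα1 hm1
    linarith [mul_nonneg hab.le (sq_nonneg (1 - c))]

lemma one_sub_weighted_div_eq {α t : ℝ} (hD : α * (1 - t) + (1 - α) * t ≠ 0) :
    1 - α * (1 - t) / (α * (1 - t) + (1 - α) * t) =
      (1 - α) * t / (1 - α + (1 - t) * (2 * α - 1)) := by
  rw [one_sub_div hD]
  congr 1 <;> ring

lemma one_sub_weighted_div_le {α t : ℝ} (hα : α ∈ Set.Ico (1 / 2 : ℝ) 1)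
    (ht : t ∈ Set.Icc (0 : ℝ) 1) :
    1 - (1 - α) * t / (1 - α + (1 - t) * (2 * α - 1)) ≤ (α / (1 - α)) * (1 - t) := by
  obtain ⟨hα0, hα1⟩ := hα
  obtain ⟨ht0, ht1⟩ := ht
  have hD : 0 < 1 - α + (1 - t) * (2 * α - 1) := by nlinarith
  calc 1 - (1 - α) * t / (1 - α + (1 - t) * (2 * α - 1))
      = α * (1 - t) / (1 - α + (1 - t) * (2 * α - 1)) := by
        rw [one_sub_div hD.ne']
        congr 1
        ring
    _ ≤ α * (1 - t) / (1 - α) :=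
        div_le_div_of_nonneg_left (by nlinarith) (by linarith) (by nlinarith)
    _ = (α / (1 - α)) * (1 - t) := div_mul_eq_mul_div α (1 - α) (1 - t) |>.symm

theorem expectile_of_bernoulli_general
    {Ω : Type*} [MeasurableSpace Ω] (P : Measure Ω)
    (α : ℝ) (hα : α ∈ Set.Ico (1 / 2 : ℝ) 1)
    (q : ℝ) (hq : q ∈ Set.Icc (0 : ℝ) 1)
    (B : Ω → ℝ) (hB : Measurable B) (hBlaw : Measure.map B P = bern q) :
    (∀ m : ℝ, m ≠ α * q / (α * q + (1 - α) * (1 - q)) →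
      expectileLoss P α B (α * q / (α * q + (1 - α) * (1 - q))) < expectileLoss P α B m) ∧
    (∀ t ∈ Set.Icc (0 : ℝ) 1,
      1 - α * (1 - t) / (α * (1 - t) + (1 - α) * t) =
        (1 - α) * t / (1 - α + (1 - t) * (2 * α - 1)) ∧
      1 - (1 - α) * t / (1 - α + (1 - t) * (2 * α - 1)) ≤ (α / (1 - α)) * (1 - t)) := by
  refine ⟨fun m hm => ?_, fun t ht => ⟨one_sub_weighted_div_eq ?_, one_sub_weighted_div_le hα ht⟩⟩
  · rw [expectileLoss_eq_map P α hB, expectileLoss_eq_map P α hB, hBlaw]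
    exact expectileLoss_bern_lt ⟨by linarith [hα.1], hα.2⟩ hq hm
  · have hD : 0 < α * (1 - t) + (1 - α) * t := by nlinarith [hα.1, hα.2, ht.1, ht.2]
    exact hD.ne'

/-- Example 3.4: for a Bernoulli random variable `B` with parameter `q`, the expectile loss is
uniquely minimized at `m* = αq/(αq+(1-α)(1-q))`; equivalently `g_ρ(t) = (1-α)t/(1-α+(1-t)(2α-1))`
and `1 - g_ρ(t) ≤ (α/(1-α))(1-t)`. -/
theorem expectile_of_bernoulli
    {Ω : Type*} [MeasurableSpace Ω] (P : Measure Ω) [IsProbabilityMeasure P]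
    (α : ℝ) (hα : α ∈ Set.Ico (1 / 2 : ℝ) 1)
    (q : ℝ) (hq : q ∈ Set.Icc (0 : ℝ) 1)
    (B : Ω → ℝ) (hB : Measurable B) (hBlaw : Measure.map B P = bern q) :
    (∀ m : ℝ, m ≠ α * q / (α * q + (1 - α) * (1 - q)) →
      expectileLoss P α B (α * q / (α * q + (1 - α) * (1 - q))) < expectileLoss P α B m) ∧
    (∀ t ∈ Set.Icc (0 : ℝ) 1,
      1 - α * (1 - t) / (α * (1 - t) + (1 - α) * t) =
        (1 - α) * t / (1 - α + (1 - t) * (2 * α - 1)) ∧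
      1 - (1 - α) * t / (1 - α + (1 - t) * (2 * α - 1)) ≤ (α / (1 - α)) * (1 - t)) :=
  expectile_of_bernoulli_general P α hα q hq B hB hBlaw
end
end

section
/- Let h > 0 and let μ be a Borel probability measure on ℝ supported on the grid hℕ₀ = {0, h, 2h, …} with μ({0}) > 0. Then for every n ∈ ℕ the n-fold convolution μ^{*n} satisfies μ^{*n}({0}) = μ({0})^n and, for every integer j ≥ 1, μ^{*n}({jh}) = (1/(j·μ({0}))) · ∑_{ℓ=1}^{j} ((n + 1)ℓ − j) · μ({ℓh}) · μ^{*n}({(j − ℓ)h}). -/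
open MeasureTheory ProbabilityTheory Filter
open scoped ENNReal NNReal Topology

noncomputable section

/-!
Write `P = ∑ⱼ μ{jh} Xʲ`. Convolving measures on the grid multiplies these generating functions,
so `μ^{*n}{jh}` is the `j`-th coefficient of `Pⁿ`. With the Euler operator `θ = X · d/dX`,
`P · θ(Pⁿ) = n · θ(P) · Pⁿ`; comparing the coefficients of `Xʲ` gives
`∑_{a+b=j} ((n + 1) a - j) μ{ah} μ^{*n}{bh} = 0`, and the term `a = 0` is `-j μ{0} μ^{*n}{jh}`.
-/

open Finset PowerSeries

namespace PowerSeries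

variable {R : Type*}

theorem coeff_X_mul_derivative [CommSemiring R] (f : R⟦X⟧) (j : ℕ) :
    coeff j (X * d⁄dX R f) = j * coeff j f := by
  cases j with
  | zero => simp
  | succ k => rw [coeff_succ_X_mul, coeff_derivative, mul_comm]; push_cast; rfl

/-- Coefficients of the identity `P · θ(Pⁿ) = n · θ(P) · Pⁿ` for the Euler operator
`θ = X · d/dX`. -/
theorem sum_antidiagonal_coeff_mul_snd_mul_coeff_pow [CommSemiring R] (P : R⟦X⟧) (n j : ℕ) :
    ∑ x ∈ antidiagonal j, coeff x.1 P * (x.2 * coeff x.2 (P ^ n)) =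
      n * ∑ x ∈ antidiagonal j, x.1 * coeff x.1 P * coeff x.2 (P ^ n) := by
  have euler : P * (X * d⁄dX R (P ^ n)) = C (n : R) * ((X * d⁄dX R P) * P ^ n) := by
    cases n with
    | zero => simp
    | succ n =>
      rw [derivative_pow, map_natCast, pow_succ, Nat.add_sub_cancel]
      ring
  have := congrArg (coeff j) euler
  rw [coeff_C_mul, coeff_mul, coeff_mul] at this
  simpa only [coeff_X_mul_derivative] using this

theorem mul_coeff_zero_mul_coeff_pow [CommRing R] (P : R⟦X⟧) (n j : ℕ) :
    j * coeff 0 P * coeff j (P ^ n) =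
      ∑ ℓ ∈ Icc 1 j, ((n + 1) * ℓ - j : R) * coeff ℓ P * coeff (j - ℓ) (P ^ n) := by
  have hzero : ∑ x ∈ antidiagonal j,
      ((n + 1) * x.1 - j : R) * coeff x.1 P * coeff x.2 (P ^ n) = 0 := by
    have euler := sum_antidiagonal_coeff_mul_snd_mul_coeff_pow P n j
    rw [mul_sum] at euler
    rw [← sub_eq_zero.2 euler.symm, ← sum_sub_distrib]
    refine sum_congr rfl fun x hx => ?_
    rw [← mem_antidiagonal.1 hx]
    push_cast
    ring
  rw [Nat.sum_antidiagonal_eq_sum_range_succ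
      (fun a b => ((n + 1) * a - j : R) * coeff a P * coeff b (P ^ n)),
    Nat.range_succ_eq_Icc_zero, ← add_sum_Ioc_eq_sum_Icc (Nat.zero_le j),
    ← Icc_add_one_left_eq_Ioc, zero_add] at hzero
  simp only [Nat.cast_zero, mul_zero, zero_sub, Nat.sub_zero] at hzero
  linear_combination -hzero

end PowerSeries

def grid (h : ℝ) : Set ℝ := Set.range fun j : ℕ => (j : ℝ) * h

def gridPGF (μ : Measure ℝ) (h : ℝ) : ℝ⟦X⟧ := PowerSeries.mk fun j => (μ {(j : ℝ) * h}).toReal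

section Grid

variable {h : ℝ} {ν μ : Measure ℝ}

theorem measurableSet_grid (h : ℝ) : MeasurableSet (grid h) :=
  (Set.countable_range _).measurableSet

theorem zero_mem_grid (h : ℝ) : (0 : ℝ) ∈ grid h := ⟨0, by simp⟩

theorem add_mem_grid {x y : ℝ} (hx : x ∈ grid h) (hy : y ∈ grid h) : x + y ∈ grid h := by
  obtain ⟨a, rfl⟩ := hx
  obtain ⟨b, rfl⟩ := hy
  exact ⟨a + b, by push_cast; ring⟩

theorem ae_mem_grid_conv (hν : ∀ᵐ x ∂ν, x ∈ grid h) (hμ : ∀ᵐ x ∂μ, x ∈ grid h) :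
    ∀ᵐ x ∂(ν ∗ μ), x ∈ grid h := by
  rw [Measure.conv,
    ae_map_iff measurable_add.aemeasurable (p := (· ∈ grid h)) (measurableSet_grid h)]
  filter_upwards [Measure.quasiMeasurePreserving_fst.ae hν,
    Measure.quasiMeasurePreserving_snd.ae hμ] with p hp₁ hp₂
  exact add_mem_grid hp₁ hp₂

theorem conv_apply_singleton_natCast_mul [SFinite μ] (hh : h ≠ 0)
    (hν : ∀ᵐ x ∂ν, x ∈ grid h) (hμ : ∀ᵐ x ∂μ, x ∈ grid h) (j : ℕ) :
    (ν ∗ μ) {(j : ℝ) * h} = ∑ x ∈ antidiagonal j, ν {(x.1 : ℝ) * h} * μ {(x.2 : ℝ) * h} := by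
  have hpoints : (fun p : ℝ × ℝ => p.1 + p.2) ⁻¹' {(j : ℝ) * h}
      =ᵐ[ν.prod μ] ⋃ x ∈ antidiagonal j, {((x.1 : ℝ) * h, (x.2 : ℝ) * h)} := by
    rw [Filter.eventuallyEq_set]
    filter_upwards [Measure.quasiMeasurePreserving_fst.ae hν,
      Measure.quasiMeasurePreserving_snd.ae hμ]
    rintro ⟨_, _⟩ ⟨a, rfl⟩ ⟨b, rfl⟩
    simp only [Set.mem_preimage, Set.mem_singleton_iff, Set.mem_iUnion, Prod.mk.injEq,
      HasAntidiagonal.mem_antidiagonal, exists_prop, ← add_mul, mul_left_inj' hh]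
    norm_cast
    simp
  rw [Measure.conv, Measure.map_apply measurable_add (measurableSet_singleton _),
    measure_congr hpoints, measure_biUnion_finset _ (fun _ _ => measurableSet_singleton _)]
  · simp only [← Set.singleton_prod_singleton, Measure.prod_prod]
  · intro x _ y _ hxy
    simpa [Function.onFun, mul_left_inj' hh, Prod.ext_iff] using hxy

theorem convPow_succ (n : ℕ) : convPow μ (n + 1) = convPow μ n ∗ μ := rfl

instance isFiniteMeasure_convPow [IsFiniteMeasure μ] (n : ℕ) : IsFiniteMeasure (convPow μ n) := by
  induction n with
  | zero => exact inferInstanceAs (IsFiniteMeasure (Measure.dirac 0))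
  | succ n ih => exact inferInstanceAs (IsFiniteMeasure (convPow μ n ∗ μ))

theorem ae_mem_grid_convPow (hμ : ∀ᵐ x ∂μ, x ∈ grid h) (n : ℕ) :
    ∀ᵐ x ∂(convPow μ n), x ∈ grid h := by
  induction n with
  | zero => exact (ae_dirac_iff (measurableSet_grid h)).2 (zero_mem_grid h)
  | succ n ih => exact ae_mem_grid_conv ih hμ

theorem coeff_gridPGF (j : ℕ) : coeff j (gridPGF μ h) = (μ {(j : ℝ) * h}).toReal :=
  coeff_mk _ _

theorem coeff_gridPGF_pow [IsFiniteMeasure μ] (hh : h ≠ 0) (hμ : ∀ᵐ x ∂μ, x ∈ grid h)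
    (n j : ℕ) : coeff j (gridPGF μ h ^ n) = (convPow μ n {(j : ℝ) * h}).toReal := by
  induction n generalizing j with
  | zero =>
    rw [pow_zero, coeff_one, convPow, Measure.dirac_apply' _ (measurableSet_singleton _)]
    by_cases hj : j = 0 <;> simp [zero_eq_mul, hh, hj]
  | succ n ih =>
    rw [pow_succ, coeff_mul, convPow_succ,
      conv_apply_singleton_natCast_mul hh (ae_mem_grid_convPow hμ n) hμ,
      ENNReal.toReal_sum fun _ _ => ENNReal.mul_ne_top (measure_ne_top _ _) (measure_ne_top _ _)]
    simp only [ih, coeff_gridPGF, ENNReal.toReal_mul]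

end Grid

theorem convPow_grid_recursion_general
    (h : ℝ) (hh : 0 < h) (μ : Measure ℝ) [IsProbabilityMeasure μ]
    (hsupp : μ {x : ℝ | ∃ j : ℕ, x = (j : ℝ) * h} = 1)
    (hzero : 0 < μ {0}) (n : ℕ) :
    convPow μ n {0} = μ {0} ^ n ∧
    ∀ j : ℕ, 1 ≤ j →
      (convPow μ n {(j : ℝ) * h}).toReal =
        1 / (j * (μ {0}).toReal) *
          ∑ ℓ ∈ Finset.Icc 1 j,
            (((n : ℝ) + 1) * ℓ - j) * (μ {(ℓ : ℝ) * h}).toReal *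
              (convPow μ n {((j : ℝ) - (ℓ : ℝ)) * h}).toReal := by
  have hμ : ∀ᵐ x ∂μ, x ∈ grid h := by
    refine (prob_compl_eq_zero_iff (measurableSet_grid h)).2 ?_
    convert hsupp using 2
    ext x
    simp [grid, eq_comm]
  have hmass (m j : ℕ) : (convPow μ m {(j : ℝ) * h}).toReal = coeff j (gridPGF μ h ^ m) :=
    (coeff_gridPGF_pow hh.ne' hμ m j).symm
  have hmass_zero : (μ {0}).toReal = coeff 0 (gridPGF μ h) := by simp [coeff_gridPGF]
  constructor
  · rw [← ENNReal.toReal_eq_toReal_iff' (measure_ne_top _ _) (by simp), ENNReal.toReal_pow,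
      hmass_zero]
    simpa using hmass n 0
  · intro j hj
    have hsum : ∑ ℓ ∈ Icc 1 j, (((n : ℝ) + 1) * ℓ - j) * (μ {(ℓ : ℝ) * h}).toReal *
        (convPow μ n {((j : ℝ) - (ℓ : ℝ)) * h}).toReal = ∑ ℓ ∈ Icc 1 j,
          (((n : ℝ) + 1) * ℓ - j) * coeff ℓ (gridPGF μ h) * coeff (j - ℓ) (gridPGF μ h ^ n) := by
      refine sum_congr rfl fun ℓ hℓ => ?_
      rw [← Nat.cast_sub (mem_Icc.1 hℓ).2, hmass, coeff_gridPGF]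
    have hμ0 : (μ {0}).toReal ≠ 0 := (ENNReal.toReal_pos hzero.ne' (measure_ne_top _ _)).ne'
    have hj0 : (j : ℝ) ≠ 0 := Nat.cast_ne_zero.2 (by omega)
    rw [hsum, ← mul_coeff_zero_mul_coeff_pow, hmass, ← hmass_zero]
    field_simp

/-- Eqs. (A.1)–(A.2): recursive scheme for the `n`-fold convolution of a probability measure
supported on the grid `hℕ₀` with positive mass at `0`. -/
theorem convPow_grid_recursion
    (h : ℝ) (hh : 0 < h) (μ : Measure ℝ) [IsProbabilityMeasure μ]
    (hsupp : μ {x : ℝ | ∃ j : ℕ, x = (j : ℝ) * h} = 1)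
    (hzero : 0 < μ {0}) (n : ℕ) (hn : 0 < n) :
    convPow μ n {0} = μ {0} ^ n ∧
    ∀ j : ℕ, 1 ≤ j →
      (convPow μ n {(j : ℝ) * h}).toReal =
        1 / (j * (μ {0}).toReal) *
          ∑ ℓ ∈ Finset.Icc 1 j,
            (((n : ℝ) + 1) * ℓ - j) * (μ {(ℓ : ℝ) * h}).toReal *
              (convPow μ n {((j : ℝ) - (ℓ : ℝ)) * h}).toReal :=
  convPow_grid_recursion_general h hh μ hsupp hzero n
end
end

section
/- Let (Ω′, 𝓕′, P′) be an atomless probability space, p ∈ [1, ∞), and let ρ : L^p(Ω′, P′) → ℝ be a law-invariant coherent risk measure, with induced statistical functional R_ρ. Let Y₁, …, Y_u be real-valued random variables on a probability space (Ω, 𝓕, P), let μ̂_u(ω) := (1/u)·∑_{i=1}^u δ_{Y_i(ω)} be the empirical measure, and let μ̂_u^{*n}(ω) denote its n-fold convolution. Then for every n, u ∈ ℕ the map ω ↦ R_ρ(μ̂_u^{*n}(ω)) is (𝓕, 𝓑(ℝ))-measurable. -/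
/-!
The n-fold convolution of the empirical measure of `Y₁, …, Y_u` is the uniform measure on the
`u^n` points `Y_{f 1} + ⋯ + Y_{f n}`, `f : Fin n → Fin u`, which depend measurably on `ω`. So it
suffices that `v ↦ R μ_v`, with `μ_v` the uniform measure on the atoms `v`, is continuous for a
fixed finite index type. It is even 1-Lipschitz for the sup distance: realizing `μ_x` and `μ_y`
as the laws of `x ∘ I` and `y ∘ I` for one uniformly distributed random index `I`, monotonicity
and cash additivity of `ρ` give `R μ_x ≤ R μ_y + dist x y`.
-/

open MeasureTheory ProbabilityTheory Filter
open scoped ENNReal NNReal Topology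

noncomputable section

section EmpiricalMeasure

variable {α β : Type*} [MeasurableSpace α] [MeasurableSpace β] {ι κ : Type*} [Fintype ι]
  [Fintype κ]

def empiricalMeasure (v : ι → α) : Measure α :=
  (Fintype.card ι : ℝ≥0∞)⁻¹ • ∑ k, Measure.dirac (v k)

lemma empiricalMeasure_comp_equiv (e : κ ≃ ι) (v : ι → α) :
    empiricalMeasure (v ∘ e) = empiricalMeasure v := by
  rw [empiricalMeasure, empiricalMeasure, Fintype.card_congr e]
  congr 1
  exact Fintype.sum_equiv e _ _ fun _ => rfl

lemma isProbabilityMeasure_empiricalMeasure [Nonempty ι] (v : ι → α) :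
    IsProbabilityMeasure (empiricalMeasure v) := by
  constructor
  simp [empiricalMeasure, ENNReal.inv_mul_cancel]

lemma map_empiricalMeasure {f : α → β} (hf : Measurable f) (v : ι → α) :
    (empiricalMeasure v).map f = empiricalMeasure (f ∘ v) := by
  simp only [empiricalMeasure, Measure.map_smul, Measure.map_finset_sum' hf.aemeasurable,
    Measure.map_dirac' hf, Function.comp_apply]

lemma empiricalMeasure_prod (a : ι → α) (b : κ → β) :
    (empiricalMeasure a).prod (empiricalMeasure b) = empiricalMeasure (Prod.map a b) := by
  simp only [empiricalMeasure, Measure.prod_smul_left, Measure.prod_smul_right,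
    ← Measure.sum_fintype, Measure.prod_sum, Measure.dirac_prod_dirac, smul_smul,
    Fintype.card_prod, Nat.cast_mul]
  rw [ENNReal.mul_inv (.inr (ENNReal.natCast_ne_top _)) (.inl (ENNReal.natCast_ne_top _)),
    mul_comm]
  rfl

end EmpiricalMeasure

lemma convPow_empiricalMeasure {ι : Type*} [Fintype ι] (v : ι → ℝ) (n : ℕ) :
    convPow (empiricalMeasure v) n = empiricalMeasure (fun f : Fin n → ι => ∑ i, v (f i)) := by
  induction n with
  | zero => simp [convPow, empiricalMeasure]
  | succ n ih =>
    rw [convPow, ih, empiricalMeasure_prod, map_empiricalMeasure measurable_add,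
      ← empiricalMeasure_comp_equiv ((Equiv.prodComm _ _).trans (Fin.snocEquiv fun _ => ι))]
    congr 1
    ext ⟨f, k⟩
    simp [Fin.sum_univ_castSucc]

lemma empMeas_eq_empiricalMeasure {Ω : Type*} (Y : ℕ → Ω → ℝ) (u : ℕ) (ω : Ω) :
    empMeas Y u ω = empiricalMeasure (fun i : Fin u => Y i ω) := by
  rw [empMeas, empiricalMeasure, Fintype.card_fin,
    Fin.sum_univ_eq_sum_range (fun i => Measure.dirac (Y i ω)) u]

section RiskMeasure

variable {Ω' : Type*} [MeasurableSpace Ω'] {P' : Measure Ω'}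

lemma exists_index_map_eq_empiricalMeasure
    (hatomless : ∀ 𝔪 : Measure ℝ, IsProbabilityMeasure 𝔪 →
      ∃ X : Ω' → ℝ, Measurable X ∧ Measure.map X P' = 𝔪)
    (ι : Type*) [Fintype ι] [Nonempty ι] :
    ∃ I : Ω' → ι, ∀ v : ι → ℝ, Measurable (v ∘ I) ∧ P'.map (v ∘ I) = empiricalMeasure v := by
  let e := Fintype.equivFin ι
  let decode : ℕ → ι := fun m => e.symm ⟨m % Fintype.card ι, Nat.mod_lt m Fintype.card_pos⟩
  have decode_floor : ∀ k, decode ⌊((e k : ℕ) : ℝ)⌋₊ = k := by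
    simp [decode, Nat.mod_eq_of_lt (e _).isLt]
  obtain ⟨Z, hZ, hZ_law⟩ :=
    hatomless _ (isProbabilityMeasure_empiricalMeasure fun k => ((e k : ℕ) : ℝ))
  refine ⟨fun ω => decode ⌊Z ω⌋₊, fun v => ?_⟩
  have hdecode : Measurable fun t : ℝ => v (decode ⌊t⌋₊) :=
    (measurable_from_nat (f := fun m => v (decode m))).comp Nat.measurable_floor
  refine ⟨hdecode.comp hZ, ?_⟩
  calc P'.map (v ∘ _) = (P'.map Z).map fun t => v (decode ⌊t⌋₊) :=
        (Measure.map_map hdecode hZ).symm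
    _ = empiricalMeasure v := by
        rw [hZ_law, map_empiricalMeasure hdecode]
        simp only [Function.comp_def, decode_floor]

lemma lipschitzWith_comp_empiricalMeasure [IsFiniteMeasure P']
    (hatomless : ∀ 𝔪 : Measure ℝ, IsProbabilityMeasure 𝔪 →
      ∃ X : Ω' → ℝ, Measurable X ∧ Measure.map X P' = 𝔪)
    {q : ℝ≥0∞} {ρ : (Ω' → ℝ) → ℝ}
    (hmono : ∀ X Y : Ω' → ℝ, MemLp X q P' → MemLp Y q P' → X ≤ᵐ[P'] Y → ρ X ≤ ρ Y)
    (hcash : ∀ X : Ω' → ℝ, MemLp X q P' → ∀ b : ℝ, ρ (fun ω => X ω + b) = ρ X + b)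
    {R : Measure ℝ → ℝ} (hR : ∀ X : Ω' → ℝ, Measurable X → MemLp X q P' → R (P'.map X) = ρ X)
    (ι : Type*) [Fintype ι] :
    LipschitzWith 1 fun v : ι → ℝ => R (empiricalMeasure v) := by
  refine LipschitzWith.of_le_add fun x y => ?_
  cases isEmpty_or_nonempty ι
  · rw [Subsingleton.elim x y]
    exact le_add_of_nonneg_right dist_nonneg
  obtain ⟨I, hI⟩ := exists_index_map_eq_empiricalMeasure hatomless ι
  have hmemLp : ∀ v : ι → ℝ, MemLp (v ∘ I) q P' := fun v =>
    MemLp.of_bound (hI v).1.aestronglyMeasurable ‖v‖ (ae_of_all _ fun ω => norm_le_pi_norm v _)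
  have hR_comp : ∀ v : ι → ℝ, R (empiricalMeasure v) = ρ (v ∘ I) := fun v => by
    rw [← (hI v).2, hR _ (hI v).1 (hmemLp v)]
  have hle : ∀ k, x k ≤ y k + dist x y := fun k => by
    have := dist_le_pi_dist x y k
    rw [Real.dist_eq] at this
    linarith [le_abs_self (x k - y k)]
  rw [hR_comp, hR_comp]
  calc ρ (x ∘ I) ≤ ρ (fun ω => y (I ω) + dist x y) :=
        hmono _ _ (hmemLp x) ((hmemLp y).add (memLp_const _)) (ae_of_all _ fun ω => hle (I ω))
    _ = ρ (y ∘ I) + dist x y := hcash _ (hmemLp y) _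

end RiskMeasure

theorem plugin_estimator_measurable_general
    {Ω' : Type*} [MeasurableSpace Ω'] (P' : Measure Ω') [IsProbabilityMeasure P']
    (hatomless : ∀ 𝔪 : Measure ℝ, IsProbabilityMeasure 𝔪 →
      ∃ X : Ω' → ℝ, Measurable X ∧ Measure.map X P' = 𝔪)
    (p : ℝ)
    (ρ : (Ω' → ℝ) → ℝ)
    (hmono : ∀ X Y : Ω' → ℝ, MemLp X (ENNReal.ofReal p) P' → MemLp Y (ENNReal.ofReal p) P' →
      X ≤ᵐ[P'] Y → ρ X ≤ ρ Y)
    (hcash : ∀ X : Ω' → ℝ, MemLp X (ENNReal.ofReal p) P' → ∀ b : ℝ,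
      ρ (fun ω => X ω + b) = ρ X + b)
    (R : Measure ℝ → ℝ)
    (hR : ∀ X : Ω' → ℝ, Measurable X → MemLp X (ENNReal.ofReal p) P' →
      R (Measure.map X P') = ρ X)
    {Ω : Type*} [MeasurableSpace Ω]
    (Y : ℕ → Ω → ℝ) (hY : ∀ i, Measurable (Y i)) (u : ℕ) (n : ℕ) :
    Measurable fun ω => R (convPow (empMeas Y u ω) n) := by
  have hR_cont := (lipschitzWith_comp_empiricalMeasure hatomless hmono hcash hR
    (Fin n → Fin u)).continuous
  have hsums : Measurable fun ω (f : Fin n → Fin u) => ∑ i, Y (f i) ω :=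
    measurable_pi_lambda _ fun f => Finset.measurable_sum _ fun i _ => hY (f i)
  simp only [empMeas_eq_empiricalMeasure, convPow_empiricalMeasure]
  exact hR_cont.measurable.comp hsums

/-- Remark 2.4: for a law-invariant coherent risk measure `ρ` on `L^p` of an atomless
probability space with induced statistical functional `R`, the empirical plug-in estimator
`ω ↦ R(μ̂_u^{*n}(ω))` is measurable. -/
theorem plugin_estimator_measurable
    {Ω' : Type*} [MeasurableSpace Ω'] (P' : Measure Ω') [IsProbabilityMeasure P']
    (hatomless : ∀ 𝔪 : Measure ℝ, IsProbabilityMeasure 𝔪 →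
      ∃ X : Ω' → ℝ, Measurable X ∧ Measure.map X P' = 𝔪)
    (p : ℝ) (hp : 1 ≤ p)
    (ρ : (Ω' → ℝ) → ℝ)
    (hmono : ∀ X Y : Ω' → ℝ, MemLp X (ENNReal.ofReal p) P' → MemLp Y (ENNReal.ofReal p) P' →
      X ≤ᵐ[P'] Y → ρ X ≤ ρ Y)
    (hcash : ∀ X : Ω' → ℝ, MemLp X (ENNReal.ofReal p) P' → ∀ b : ℝ,
      ρ (fun ω => X ω + b) = ρ X + b)
    (hsub : ∀ X Y : Ω' → ℝ, MemLp X (ENNReal.ofReal p) P' → MemLp Y (ENNReal.ofReal p) P' →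
      ρ (fun ω => X ω + Y ω) ≤ ρ X + ρ Y)
    (hpos : ∀ X : Ω' → ℝ, MemLp X (ENNReal.ofReal p) P' → ∀ c : ℝ, 0 ≤ c →
      ρ (fun ω => c * X ω) = c * ρ X)
    (hlawinv : ∀ X Y : Ω' → ℝ, MemLp X (ENNReal.ofReal p) P' → MemLp Y (ENNReal.ofReal p) P' →
      Measure.map X P' = Measure.map Y P' → ρ X = ρ Y)
    (R : Measure ℝ → ℝ)
    (hR : ∀ X : Ω' → ℝ, Measurable X → MemLp X (ENNReal.ofReal p) P' →
      R (Measure.map X P') = ρ X)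
    {Ω : Type*} [MeasurableSpace Ω] (P : Measure Ω) [IsProbabilityMeasure P]
    (Y : ℕ → Ω → ℝ) (hY : ∀ i, Measurable (Y i)) (u : ℕ) (hu : 0 < u) (n : ℕ) :
    Measurable fun ω => R (convPow (empMeas Y u ω) n) :=
  plugin_estimator_measurable_general P' hatomless p ρ hmono hcash R hR Y hY u n
end
end
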